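/- arXiv:2504.00314 — 3 statements merged into one kernel-verified Lean document; each statement's English description precedes it below -/
import Mathlib

section
/- Let d be a positive even integer, H_k = F_{2+d(k-1)}, A = K_d - 1. If n > F_{2+d} - 1 is an integer and ℓ is the maximal index with H_ℓ ≤ n, then ℓ ≥ 2 and (A+1)·H_ℓ > n. -/
/-- Lucas sequence: K 1 = 1, K 2 = 3, K (k+2) = K (k+1) + K k. -/
def lucas : ℕ → ℕ
  | 0 => 2
  | 1 => 1
  | n + 2 => lucas (n + 1) + lucas n

/-- The Chung–Graham rule of expansion for even interval `d`,
with `A = lucas d - 1` and `B = Nat.fib (2 + d) - 1`.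
Sequences are indexed from 1 (so `ε 0 = 0`) and finitely supported. -/
def CGRule (d : ℕ) (ε : ℕ → ℕ) : Prop :=
  ε 0 = 0 ∧
  {k | ε k ≠ 0}.Finite ∧
  ε 1 ≤ Nat.fib (2 + d) - 1 ∧
  (∀ k, 2 ≤ k → ε k ≤ lucas d - 1) ∧
  (∀ m, 2 ≤ m → ε m = lucas d - 1 →
    (∀ k, 2 ≤ k → k ≤ m - 1 → ε k = lucas d - 1 - 1) →
    ε 1 < Nat.fib (2 + d) - 1) ∧
  (∀ k j, 2 ≤ k → k < j → ε k = lucas d - 1 → ε j = lucas d - 1 →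
    ∃ c, k < c ∧ c < j ∧ ε c ≤ lucas d - 1 - 2)

/-- Lexicographic-from-the-right strict order on coefficient sequences. -/
def CGlt (ε τ : ℕ → ℕ) : Prop :=
  ∃ ℓ, ε ℓ < τ ℓ ∧ ∀ k, ℓ < k → ε k = τ k

lemma lucas_pos : ∀ n, 0 < lucas n := by
  intro n
  induction n using Nat.twoStepInduction with
  | zero => simp [lucas]
  | one => simp [lucas]
  | more n ih _ => simp [lucas]; omega

lemma lucas_eq : ∀ n, lucas (n + 1) = Nat.fib n + Nat.fib (n + 2) := by
  intro n
  induction n using Nat.twoStepInduction with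
  | zero => simp [lucas]
  | one => simp [lucas]; decide
  | more n ih1 ih2 =>
    rw [show n+1+2 = n+3 from by ring] at ih2
    have f2 : Nat.fib (n+2) = Nat.fib n + Nat.fib (n+1) := Nat.fib_add_two
    have f3 : Nat.fib (n+3) = Nat.fib (n+1) + Nat.fib (n+2) := Nat.fib_add_two
    have f4 : Nat.fib (n+4) = Nat.fib (n+2) + Nat.fib (n+3) := Nat.fib_add_two
    have l3 : lucas (n+3) = lucas (n+2) + lucas (n+1) := rfl
    rw [show n+1+1 = n+2 from by ring] at ih2
    show lucas (n+3) = Nat.fib (n+2) + Nat.fib (n+4)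
    omega

lemma cassini : ∀ t, Nat.fib (2*t+2)^2 + 1 = Nat.fib (2*t+1) * Nat.fib (2*t+3) := by
  intro t
  induction t with
  | zero => decide
  | succ t ih =>
    have h1 : Nat.fib (2*t+3) = Nat.fib (2*t+1) + Nat.fib (2*t+2) := Nat.fib_add_two
    have h2 : Nat.fib (2*t+4) = Nat.fib (2*t+2) + Nat.fib (2*t+3) := Nat.fib_add_two
    have h3 : Nat.fib (2*t+5) = Nat.fib (2*t+3) + Nat.fib (2*t+4) := Nat.fib_add_two
    have e2 : 2*(t+1)+2 = 2*t+4 := by ring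
    have e1 : 2*(t+1)+1 = 2*t+3 := by ring
    have e3 : 2*(t+1)+3 = 2*t+5 := by ring
    rw [e1, e2, e3, h3, h2, h1]
    nlinarith [ih]

lemma key (d : ℕ) (hd : 0 < d) (hde : Even d) :
    ∀ k, Nat.fib (k + 2*d) + Nat.fib k = lucas d * Nat.fib (k + d) := by
  obtain ⟨r, hr⟩ := hde
  obtain ⟨t, rfl⟩ : ∃ t, d = 2*t + 2 := ⟨r - 1, by omega⟩
  have h1 : Nat.fib (2*t+3) = Nat.fib (2*t+1) + Nat.fib (2*t+2) := Nat.fib_add_two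
  have hl : lucas (2*t+2) = Nat.fib (2*t+1) + Nat.fib (2*t+3) := by
    have h := lucas_eq (2*t+1)
    rw [show 2*t+1+1 = 2*t+2 from by ring, show 2*t+1+2 = 2*t+3 from by ring] at h
    exact h
  have hf2m : Nat.fib (2*(2*t+2)) = Nat.fib (2*t+2) * (2*Nat.fib (2*t+3) - Nat.fib (2*t+2)) := by
    have h := Nat.fib_two_mul (2*t+2)
    rw [show 2*t+2+1 = 2*t+3 from by ring] at h
    exact h
  intro k
  induction k using Nat.twoStepInduction with
  | zero =>
    simp only [Nat.zero_add, Nat.fib_zero, Nat.add_zero]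
    rw [hf2m, hl, h1]
    have hle : Nat.fib (2*t+2) ≤ 2*(Nat.fib (2*t+1) + Nat.fib (2*t+2)) := by omega
    generalize Nat.fib (2*t+1) = a at *
    generalize Nat.fib (2*t+2) = b at *
    have : 2*(a+b) - b = 2*a + b := by omega
    rw [this]; ring
  | one =>
    rw [show (1 : ℕ) + 2*(2*t+2) = 2*(2*t+2)+1 from by ring, Nat.fib_two_mul_add_one,
      show 2*t+2+1 = 2*t+3 from by ring, hl, Nat.fib_one,
      show (1:ℕ) + (2*t+2) = 2*t+3 from by ring]
    nlinarith [cassini t]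
  | more k ih1 ih2 =>
    have g1 : Nat.fib (k + 2 + 2*(2*t+2)) = Nat.fib (k + 2*(2*t+2)) + Nat.fib (k + 1 + 2*(2*t+2)) := by
      rw [show k + 2 + 2*(2*t+2) = (k + 2*(2*t+2)) + 2 from by ring, Nat.fib_add_two,
        show k + 2*(2*t+2) + 1 = k + 1 + 2*(2*t+2) from by ring]
    have g2 : Nat.fib (k + 2) = Nat.fib k + Nat.fib (k+1) := Nat.fib_add_two
    have g3 : Nat.fib (k + 2 + (2*t+2)) = Nat.fib (k + (2*t+2)) + Nat.fib (k + 1 + (2*t+2)) := by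
      rw [show k + 2 + (2*t+2) = (k + (2*t+2)) + 2 from by ring, Nat.fib_add_two,
        show k + (2*t+2) + 1 = k + 1 + (2*t+2) from by ring]
    rw [g1, g2, g3,
      Nat.mul_add (lucas (2*t+2)) (Nat.fib (k + (2*t+2))) (Nat.fib (k + 1 + (2*t+2)))]
    linarith [ih1, ih2]

theorem stmt_5 (d : ℕ) (hd : 0 < d) (hde : Even d) (n ℓ : ℕ)
    (hn : Nat.fib (2 + d) - 1 < n) (hℓ1 : 1 ≤ ℓ)
    (hle : Nat.fib (2 + d * (ℓ - 1)) ≤ n)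
    (hmax : ∀ m, 1 ≤ m → Nat.fib (2 + d * (m - 1)) ≤ n → m ≤ ℓ) :
    2 ≤ ℓ ∧ n < (lucas d - 1 + 1) * Nat.fib (2 + d * (ℓ - 1)) := by
  have hfp : 0 < Nat.fib (2 + d) := Nat.fib_pos.mpr (by omega)
  have hn' : Nat.fib (2 + d) ≤ n := by omega
  have hℓ2 : 2 ≤ ℓ := by
    have := hmax 2 (by norm_num) (by simpa using hn')
    exact this
  obtain ⟨j, rfl⟩ : ∃ j, ℓ = j + 2 := ⟨ℓ - 2, by omega⟩
  have hlt : n < Nat.fib (2 + d * (j + 2)) := by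
    by_contra h
    push_neg at h
    have := hmax (j + 3) (by omega) (by simpa using h)
    omega
  have hk := key d hd hde (2 + d * j)
  have e1 : 2 + d * j + 2 * d = 2 + d * (j + 2) := by ring
  have e2 : 2 + d * j + d = 2 + d * (j + 1) := by ring
  rw [e1, e2] at hk
  have hls : lucas d - 1 + 1 = lucas d := by have := lucas_pos d; omega
  refine ⟨le_refl 2 |>.trans (by omega), ?_⟩
  rw [hls]
  have e3 : (j + 2 : ℕ) - 1 = j + 1 := by omega
  rw [e3]
  calc n < Nat.fib (2 + d * (j + 2)) := hlt
    _ ≤ Nat.fib (2 + d * (j + 2)) + Nat.fib (2 + d * j) := Nat.le_add_right _ _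
    _ = lucas d * Nat.fib (2 + d * (j + 1)) := hk
end

section
/- Let d be a positive even integer, H_k = F_{2+d(k-1)}, A = K_d - 1, B = F_{2+d} - 1. For every n ≥ 3, H_{n+1} = (B-1)·H_1 + Σ_{k=2}^{n-1} (A-1)·H_k + A·H_n + 1. -/
/-!
Write `h k = F (2 + d k) = H_(k+1)`, so `h 0 = F 2 = 1`. The addition formula for Fibonacci numbers
together with Cassini's identity gives `F (x + 2d) + (-1)^d F x = K_d F (x + d)`, so for even `d`
the sequence `h` satisfies `h (k + 2) + h k = K_d h (k + 1)`. For any such sequence the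
differences `h (k + 2) - h (k + 1) = (K_d - 1) h (k + 1) - h k` telescope, and summing them
gives the stated expansion, the constant `1` coming from `h 0 = 1`.
-/

theorem lucas_eq_fib_sub_one_add_fib_add_one :
    ∀ n : ℕ, (lucas n : ℤ) = Int.fib (n - 1) + Int.fib (n + 1)
  | 0 => by simp [lucas]
  | 1 => by simp [lucas]
  | n + 2 => by
    rw [lucas, Nat.cast_add, lucas_eq_fib_sub_one_add_fib_add_one n,
      lucas_eq_fib_sub_one_add_fib_add_one (n + 1)]
    push_cast
    grind [Int.fib_add_two]

theorem one_le_lucas : ∀ n, 1 ≤ lucas n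
  | 0 | 1 => by simp [lucas]
  | n + 2 => by rw [lucas]; exact le_add_right (one_le_lucas (n + 1))

theorem two_le_lucas : ∀ {n}, n ≠ 1 → 2 ≤ lucas n
  | 0, _ => le_rfl
  | n + 2, _ => by rw [lucas]; exact add_le_add (one_le_lucas (n + 1)) (one_le_lucas n)

theorem Int.fib_add_two_mul_add_neg_one_pow_mul (x : ℤ) (d : ℕ) :
    fib (x + 2 * d) + (-1) ^ d * fib x = lucas d * fib (x + d) := by
  have hx2d := fib_add x (2 * d)
  have hxd := fib_add x d
  have h2d := two_mul (d : ℤ) ▸ fib_add (d : ℤ) d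
  have h2d1 := fib_two_mul_add_one (d : ℤ)
  have cassini := natAbs_natCast d ▸ fib_succ_mul_fib_pred_sub_fib_sq (d : ℤ)
  rw [lucas_eq_fib_sub_one_add_fib_add_one]
  linear_combination hx2d + fib (x - 1) * h2d + fib x * h2d1
    - (fib (d - 1) + fib (d + 1)) * hxd - fib x * cassini

theorem Nat.fib_add_two_mul_add_fib_of_even {d : ℕ} (hd : Even d) (m : ℕ) :
    fib (m + 2 * d) + fib m = lucas d * fib (m + d) := by
  have h := Int.fib_add_two_mul_add_neg_one_pow_mul m d
  rw [hd.neg_one_pow, one_mul] at h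
  zify
  simp only [← Int.fib_natCast]
  push_cast
  exact h

theorem apply_add_two_add_apply_zero_eq_sum {R : Type*} [CommSemiring R] [IsRightCancelAdd R]
    {a : R} {h : ℕ → R} (hrec : ∀ k, h (k + 2) + h k = (a + 2) * h (k + 1)) :
    ∀ m, h (m + 2) + h 0 = h 1 + ∑ k ∈ Finset.Icc 1 m, a * h k + (a + 1) * h (m + 1)
  | 0 => by rw [hrec 0, Finset.Icc_eq_empty_of_lt zero_lt_one, Finset.sum_empty]; ring
  | m + 1 => by
    apply add_right_cancel (b := h (m + 1))
    calc h (m + 1 + 2) + h 0 + h (m + 1) = (h (m + 1 + 2) + h (m + 1)) + h 0 := by ring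
      _ = (a + 1) * h (m + 2) + (h (m + 2) + h 0) := by rw [hrec]; ring
      _ = _ := by
        rw [apply_add_two_add_apply_zero_eq_sum hrec m, Finset.sum_Icc_succ_top (by omega)]
        ring

theorem stmt_13 (d : ℕ) (hd : 0 < d) (hde : Even d) (n : ℕ) (hn : 3 ≤ n) :
    Nat.fib (2 + d * n) =
      (Nat.fib (2 + d) - 1 - 1) * Nat.fib 2 +
        (∑ k ∈ Finset.Icc 2 (n - 1), (lucas d - 1 - 1) * Nat.fib (2 + d * (k - 1))) +
        (lucas d - 1) * Nat.fib (2 + d * (n - 1)) + 1 := by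
  obtain ⟨m, rfl⟩ : ∃ m, n = m + 2 := ⟨n - 2, by omega⟩
  obtain ⟨a, ha⟩ : ∃ a, lucas d = a + 2 :=
    ⟨lucas d - 2, by have := two_le_lucas (n := d) (by rintro rfl; exact Nat.not_even_one hde); omega⟩
  obtain ⟨b, hb⟩ : ∃ b, Nat.fib (2 + d) = b + 2 :=
    ⟨Nat.fib (2 + d) - 2, by
      have : 2 ≤ Nat.fib (2 + d) := Nat.fib_mono (show 3 ≤ 2 + d by omega)
      omega⟩
  have hrec (k : ℕ) : Nat.fib (2 + d * (k + 2)) + Nat.fib (2 + d * k)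
      = (a + 2) * Nat.fib (2 + d * (k + 1)) := by
    rw [← ha]
    convert Nat.fib_add_two_mul_add_fib_of_even hde (2 + d * k) using 3 <;> ring
  have hsum := apply_add_two_add_apply_zero_eq_sum (h := fun k ↦ Nat.fib (2 + d * k)) hrec m
  rw [show m + 2 - 1 = m + 1 by omega, ← Finset.map_add_right_Icc 1 m 1, Finset.sum_map]
  simp only [mul_zero, add_zero, Nat.fib_two, mul_one, ha, Nat.add_one_sub_one,
    add_tsub_cancel_right, addRightEmbedding_apply] at hsum ⊢
  omega
end

section
/- Let d be a positive even integer, H_k = F_{2+d(k-1)}, and let ℱ be the set of sequences satisfying the Chung–Graham rule of expansion for even interval d, equipped with the lexicographic-from-the-right order. If lub : ℱ → ℱ denotes the immediate-successor map and 0 denotes the zero sequence, then Σ_k (lub^n(0))_k · H_k = n for all n ≥ 0. -/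
section

open Real goldenRatio

theorem lucas_eq_goldenRatio_pow_add_goldenConj_pow :
    ∀ n, (lucas n : ℝ) = φ ^ n + ψ ^ n
  | 0 => by norm_num [lucas]
  | 1 => by simp [lucas, goldenRatio_add_goldenConj]
  | n + 2 => by
    rw [lucas, Nat.cast_add, lucas_eq_goldenRatio_pow_add_goldenConj_pow n,
      lucas_eq_goldenRatio_pow_add_goldenConj_pow (n + 1)]
    linear_combination (-φ ^ n) * goldenRatio_sq - ψ ^ n * goldenConj_sq

theorem fib_add_two_mul_add_fib {d : ℕ} (hd : Even d) (n : ℕ) :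
    Nat.fib (n + 2 * d) + Nat.fib n = lucas d * Nat.fib (n + d) := by
  have hφψ : φ ^ d * ψ ^ d = 1 := by
    rw [← mul_pow, goldenRatio_mul_goldenConj, hd.neg_one_pow]
  apply Nat.cast_injective (R := ℝ)
  push_cast
  simp only [coe_fib_eq, lucas_eq_goldenRatio_pow_add_goldenConj_pow]
  rw [← add_div, mul_div_assoc']
  congr 1
  linear_combination (ψ ^ n - φ ^ n) * hφψ

end

theorem three_le_lucas_add_two : ∀ m, 3 ≤ lucas (m + 2)
  | 0 => le_rfl
  | m + 1 => (three_le_lucas_add_two m).trans (Nat.le_add_right _ _)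

theorem CGlt.lt_or_gt_of_ne {ε τ : ℕ → ℕ} (hε : {k | ε k ≠ 0}.Finite)
    (hτ : {k | τ k ≠ 0}.Finite) (hne : ε ≠ τ) : CGlt ε τ ∨ CGlt τ ε := by
  have hfin : {k | ε k ≠ τ k}.Finite :=
    (hε.union hτ).subset fun k hk => by by_contra! h; simp_all
  obtain ⟨ℓ, hℓ, hmax⟩ := hfin.exists_maximal (Function.ne_iff.1 hne)
  have hagree : ∀ k, ℓ < k → ε k = τ k := fun k hk =>
    by_contra fun h => absurd (hmax h hk.le) (by omega)
  rcases Ne.lt_or_gt hℓ with h | h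
  · exact Or.inl ⟨ℓ, h, hagree⟩
  · exact Or.inr ⟨ℓ, h, fun k hk => (hagree k hk).symm⟩

theorem update_apply_eq_zero_of_lt {m c k : ℕ} {ε : ℕ → ℕ} (hs : ∀ k, m < k → ε k = 0)
    (hk : m + 1 < k) : Function.update ε (m + 1) c k = 0 := by
  rw [Function.update_of_ne (by omega)]
  exact hs k (by omega)

theorem exists_forall_lt_eq_zero_of_finite {ε : ℕ → ℕ} (h : {k | ε k ≠ 0}.Finite) :
    ∃ M, ∀ k, M < k → ε k = 0 := by
  obtain ⟨M, hM⟩ := h.bddAbove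
  exact ⟨M, fun k hk => by_contra fun hne => absurd (hM hne) (by omega)⟩

namespace CGRule

abbrev A (d : ℕ) : ℕ := lucas d - 1

abbrev B (d : ℕ) : ℕ := Nat.fib (2 + d) - 1

abbrev H (d k : ℕ) : ℕ := Nat.fib (2 + d * (k - 1))

variable {d : ℕ}

theorem two_le_A (hd : 0 < d) (hde : Even d) : 2 ≤ A d := by
  obtain ⟨e, rfl⟩ := hde
  have := three_le_lucas_add_two (e + e - 2)
  rw [Nat.sub_add_cancel (by omega)] at this
  dsimp only [A]
  omega

theorem H_one : H d 1 = 1 := rfl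

theorem H_two : H d 2 = B d + 1 := by
  have := Nat.fib_pos.2 (show 0 < 2 + d by omega)
  simp only [H, B, Nat.add_one_sub_one, mul_one]
  omega

theorem H_pos (k : ℕ) : 0 < H d k := Nat.fib_pos.2 (by omega)

theorem H_le_H_succ (k : ℕ) : H d k ≤ H d (k + 1) :=
  Nat.fib_mono (by gcongr; omega)

theorem H_lt_H_succ (hd : 0 < d) {k : ℕ} (hk : 1 ≤ k) : H d k < H d (k + 1) := by
  simp only [H, add_comm 2]
  exact Nat.fib_add_two_strictMono (Nat.mul_lt_mul_of_pos_left (by omega) hd)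

theorem lt_H_succ (hd : 0 < d) : ∀ n, n < H d (n + 1)
  | 0 => H_pos 1
  | n + 1 => Nat.lt_of_le_of_lt (lt_H_succ hd n) (H_lt_H_succ hd (by omega))

theorem H_add_two_add_H (hd : 0 < d) (hde : Even d) {k : ℕ} (hk : 1 ≤ k) :
    H d (k + 2) + H d k = A d * H d (k + 1) + H d (k + 1) := by
  obtain ⟨i, rfl⟩ := Nat.exists_eq_add_of_le' hk
  have hL : A d + 1 = lucas d := by have := two_le_A hd hde; dsimp only [A] at this ⊢; omega
  rw [← add_one_mul, hL]
  convert fib_add_two_mul_add_fib hde (2 + d * i) using 3 <;> simp <;> ring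

/-- Setting position `m + 1` to the largest digit `A d` keeps rules (2) and (3) intact. -/
def ExtendsByA (d m : ℕ) (ε : ℕ → ℕ) : Prop :=
  (∀ j, 2 ≤ j → j ≤ m → ε j = A d → ∃ c, j < c ∧ c ≤ m ∧ ε c ≤ A d - 2) ∧
  ((∀ k, 2 ≤ k → k ≤ m → ε k = A d - 1) → ε 1 < B d)

theorem iff_forall_succ {ε : ℕ → ℕ} :
    CGRule d ε ↔ ε 0 = 0 ∧ {k | ε k ≠ 0}.Finite ∧ ε 1 ≤ B d ∧
      ∀ m, 1 ≤ m → ε (m + 1) ≤ A d ∧ (ε (m + 1) = A d → ExtendsByA d m ε) := by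
  constructor
  · rintro ⟨h0, hfin, h1, hle, hrun, hgap⟩
    refine ⟨h0, hfin, h1, fun m hm =>
      ⟨hle (m + 1) (by omega), fun hA => ⟨?_, hrun _ (by omega) hA⟩⟩⟩
    intro j hj hjm hjA
    obtain ⟨c, hjc, hcm, hc⟩ := hgap j (m + 1) hj (by omega) hjA hA
    exact ⟨c, hjc, by omega, hc⟩
  · rintro ⟨h0, hfin, h1, hstep⟩
    refine ⟨h0, hfin, h1, fun k hk => ?_, fun m hm hA hrun => ?_, fun k j hk hkj hkA hjA => ?_⟩
    · obtain ⟨k, rfl⟩ := Nat.exists_eq_add_of_le' hk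
      exact (hstep (k + 1) (by omega)).1
    · obtain ⟨m, rfl⟩ := Nat.exists_eq_add_of_le' hm
      exact ((hstep (m + 1) (by omega)).2 hA).2 hrun
    · obtain ⟨j, rfl⟩ := Nat.exists_eq_add_of_le' (show 1 ≤ j by omega)
      obtain ⟨c, hkc, hcj, hc⟩ := ((hstep j (by omega)).2 hjA).1 k hk (by omega) hkA
      exact ⟨c, hkc, by omega, hc⟩

theorem ExtendsByA.congr {m : ℕ} {ε τ : ℕ → ℕ} (hm : 1 ≤ m) (h : ∀ k ≤ m, ε k = τ k)
    (hε : ExtendsByA d m ε) : ExtendsByA d m τ := by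
  obtain ⟨hgap, hrun⟩ := hε
  refine ⟨fun j hj hjm hjA => ?_, fun hτ => ?_⟩
  · obtain ⟨c, hjc, hcm, hc⟩ := hgap j hj hjm (by rwa [h j hjm])
    exact ⟨c, hjc, hcm, by rwa [← h c hcm]⟩
  · rw [← h 1 hm]
    exact hrun fun k hk hkm => by rw [h k hkm]; exact hτ k hk hkm

theorem extendsByA_succ_iff (hA : 2 ≤ A d) {m : ℕ} {ε : ℕ → ℕ} (hm : 1 ≤ m)
    (hle : ε (m + 1) ≤ A d) :
    ExtendsByA d (m + 1) ε ↔
      ε (m + 1) ≤ A d - 2 ∨ ε (m + 1) = A d - 1 ∧ ExtendsByA d m ε := by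
  constructor
  · rintro ⟨hgap, hrun⟩
    have hne : ε (m + 1) ≠ A d := fun h => by
      obtain ⟨c, _, _, _⟩ := hgap (m + 1) (by omega) le_rfl h
      omega
    by_cases hlow : ε (m + 1) ≤ A d - 2
    · exact Or.inl hlow
    have htop : ε (m + 1) = A d - 1 := by omega
    refine Or.inr ⟨htop, fun j hj hjm hjA => ?_, fun hτ => hrun fun k hk hkm => ?_⟩
    · obtain ⟨c, hjc, hcm, hc⟩ := hgap j hj (by omega) hjA
      refine ⟨c, hjc, ?_, hc⟩
      by_contra! hmc
      obtain rfl : c = m + 1 := by omega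
      omega
    · rcases Nat.lt_succ_iff_lt_or_eq.1 (Nat.lt_succ_of_le hkm) with hkm | rfl
      · exact hτ k hk (by omega)
      · exact htop
  · rintro (hlow | ⟨htop, hgap, hrun⟩)
    · refine ⟨fun j hj hjm hjA => ⟨m + 1, ?_, le_rfl, hlow⟩, fun hτ => ?_⟩
      · by_contra! hmj
        obtain rfl : j = m + 1 := by omega
        omega
      · have := hτ (m + 1) (by omega) le_rfl
        omega
    · refine ⟨fun j hj hjm hjA => ?_, fun hτ => hrun fun k hk hkm => hτ k hk (by omega)⟩
      have hjm : j ≤ m := by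
        by_contra! hmj
        obtain rfl : j = m + 1 := by omega
        omega
      obtain ⟨c, hjc, hcm, hc⟩ := hgap j hj hjm hjA
      exact ⟨c, hjc, by omega, hc⟩

theorem update (hA : 2 ≤ A d) {m c : ℕ} {ε : ℕ → ℕ} (hm : 1 ≤ m) (hε : CGRule d ε)
    (hs : ∀ k, m < k → ε k = 0) (hc : c ≤ A d) (hcA : c = A d → ExtendsByA d m ε) :
    CGRule d (Function.update ε (m + 1) c) := by
  have hτ : ∀ k ≤ m, ε k = Function.update ε (m + 1) c k :=
    fun k hk => (Function.update_of_ne (by omega) _ _).symm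
  obtain ⟨h0, -, h1, hstep⟩ := iff_forall_succ.1 hε
  refine iff_forall_succ.2 ⟨by rwa [← hτ 0 (by omega)], (Set.finite_Iic (m + 1)).subset ?_,
    by rwa [← hτ 1 hm], fun i hi => ?_⟩
  · refine fun k hk => Set.mem_Iic.2 ?_
    by_contra! hmk
    exact hk (update_apply_eq_zero_of_lt hs hmk)
  rcases lt_trichotomy i m with him | rfl | hmi
  · rw [← hτ (i + 1) (by omega)]
    exact ⟨(hstep i hi).1, fun h => ((hstep i hi).2 h).congr hi fun k hk => hτ k (by omega)⟩
  · rw [Function.update_self]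
    exact ⟨hc, fun h => (hcA h).congr hm hτ⟩
  · rw [update_apply_eq_zero_of_lt hs (by omega)]
    exact ⟨Nat.zero_le _, fun h => by omega⟩

theorem zero (hA : 2 ≤ A d) : CGRule d fun _ => 0 :=
  iff_forall_succ.2 ⟨rfl, by simp, Nat.zero_le _, fun _ _ => ⟨Nat.zero_le _, fun h => by omega⟩⟩

def partialSum (d m : ℕ) (ε : ℕ → ℕ) : ℕ := ∑ k ∈ Finset.range (m + 1), ε k * H d k

noncomputable def value (d : ℕ) (ε : ℕ → ℕ) : ℕ := ∑ᶠ k, ε k * H d k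

theorem partialSum_succ (m : ℕ) (ε : ℕ → ℕ) :
    partialSum d (m + 1) ε = partialSum d m ε + ε (m + 1) * H d (m + 1) :=
  Finset.sum_range_succ _ _

theorem partialSum_congr {m : ℕ} {ε τ : ℕ → ℕ} (h : ∀ k ≤ m, ε k = τ k) :
    partialSum d m ε = partialSum d m τ :=
  Finset.sum_congr rfl fun k hk => by rw [h k (Nat.lt_succ_iff.1 (Finset.mem_range.1 hk))]

theorem partialSum_update (m c : ℕ) (ε : ℕ → ℕ) :
    partialSum d (m + 1) (Function.update ε (m + 1) c) = partialSum d m ε + c * H d (m + 1) := by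
  rw [partialSum_succ, Function.update_self,
    partialSum_congr fun k hk => Function.update_of_ne (by omega) c ε]

theorem value_eq_partialSum {m : ℕ} {ε : ℕ → ℕ} (hs : ∀ k, m < k → ε k = 0) :
    value d ε = partialSum d m ε := by
  refine finsum_eq_sum_of_support_subset _ fun k hk => ?_
  by_contra hkm
  simp_all [hs k (by simpa using hkm)]

theorem partialSum_bounds (hd : 0 < d) (hde : Even d) {ε : ℕ → ℕ} (hε : CGRule d ε)
    {m : ℕ} (hm : 1 ≤ m) :
    partialSum d m ε < H d (m + 1) ∧
      (ExtendsByA d m ε → partialSum d m ε + H d m < H d (m + 1)) := by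
  have hA := two_le_A hd hde
  obtain ⟨h0, -, h1, hstep⟩ := iff_forall_succ.1 hε
  induction m, hm using Nat.le_induction with
  | base =>
    have hS : partialSum d 1 ε = ε 1 := by simp [partialSum, Finset.sum_range_succ, h0, H_one]
    rw [hS, H_one, H_two]
    exact ⟨by omega, fun hext => Nat.succ_lt_succ (hext.2 fun k hk hk1 => absurd hk1 (by omega))⟩
  | succ m hm ih =>
    obtain ⟨hle, htop⟩ := hstep m hm
    have hrec : H d (m + 1 + 1) + H d m = _ := H_add_two_add_H hd hde hm
    have hmono := H_le_H_succ (d := d) m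
    rw [partialSum_succ]
    constructor
    · rcases eq_or_lt_of_le hle with hA' | hA'
      · have := ih.2 (htop hA')
        rw [hA']
        omega
      · have := ih.1
        nlinarith
    · intro hext
      rcases (extendsByA_succ_iff hA hm hle).1 hext with hlow | ⟨hA', hext'⟩
      · have := ih.1
        have : ε (m + 1) + 2 ≤ A d := by omega
        nlinarith
      · have := ih.2 hext'
        have : ε (m + 1) + 1 = A d := by omega
        nlinarith

theorem partialSum_lt (hd : 0 < d) (hde : Even d) {ε : ℕ → ℕ} (hε : CGRule d ε) :
    ∀ m, partialSum d m ε < H d (m + 1)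
  | 0 => by simp [partialSum, hε.1]
  | m + 1 => (hε.partialSum_bounds hd hde (by omega)).1

theorem exists_partialSum_eq (hd : 0 < d) (hde : Even d) {m : ℕ} (hm : 1 ≤ m) {n : ℕ}
    (hn : n < H d (m + 1)) :
    ∃ ε, CGRule d ε ∧ (∀ k, m < k → ε k = 0) ∧ partialSum d m ε = n ∧
      (n + H d m < H d (m + 1) → ExtendsByA d m ε) := by
  have hA := two_le_A hd hde
  induction m, hm using Nat.le_induction generalizing n with
  | base =>
    rw [H_two] at hn
    have hs : ∀ k, 1 < k → Function.update (fun _ => 0) 1 n k = 0 :=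
      fun k hk => Function.update_of_ne (by omega) _ _
    refine ⟨Function.update (fun _ => 0) 1 n, iff_forall_succ.2 ⟨rfl, ?_, by simp; omega, ?_⟩, hs,
      by simp [partialSum, Finset.sum_range_succ, H_one], fun h => ⟨?_, ?_⟩⟩
    · exact (Set.finite_Iic 1).subset fun k hk =>
        Set.mem_Iic.2 (by_contra fun h => hk (hs k (by omega)))
    · intro i hi
      rw [hs (i + 1) (by omega)]
      exact ⟨Nat.zero_le _, fun h => by omega⟩
    · intro j hj hj1; omega
    · rw [H_one, H_two] at h
      simp
      omega
  | succ m hm ih =>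
    have hrec : H d (m + 1 + 1) + H d m = _ := H_add_two_add_H hd hde hm
    have hpos := H_pos (d := d) m
    by_cases hlarge : A d * H d (m + 1) ≤ n
    · have hr : n - A d * H d (m + 1) < H d (m + 1) := by omega
      obtain ⟨ε, hε, hs, hS, hext⟩ := ih hr
      refine ⟨Function.update ε (m + 1) (A d), hε.update hA hm hs le_rfl fun _ => hext (by omega),
        fun k hk => update_apply_eq_zero_of_lt hs hk, by rw [partialSum_update, hS]; omega,
        fun h => absurd h (by omega)⟩
    · set c := n / H d (m + 1)
      have hcr : n % H d (m + 1) + c * H d (m + 1) = n := Nat.mod_add_div' n _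
      have hc : c < A d := (Nat.div_lt_iff_lt_mul (H_pos _)).2 (by omega)
      obtain ⟨ε, hε, hs, hS, hext⟩ := ih (Nat.mod_lt _ (H_pos _))
      refine ⟨Function.update ε (m + 1) c, hε.update hA hm hs hc.le fun h => absurd h hc.ne,
        fun k hk => update_apply_eq_zero_of_lt hs hk, by rw [partialSum_update, hS, hcr],
        fun h => ?_⟩
      refine (extendsByA_succ_iff hA hm (by simp; omega)).2 ?_
      rw [Function.update_self]
      by_cases hlow : c ≤ A d - 2
      · exact Or.inl hlow
      have htop : c * H d (m + 1) + H d (m + 1) = A d * H d (m + 1) := by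
        rw [← add_one_mul, show c + 1 = A d by omega]
      exact Or.inr ⟨by omega,
        (hext (by omega)).congr hm fun k hk => (Function.update_of_ne (by omega) _ _).symm⟩

theorem exists_value_eq (hd : 0 < d) (hde : Even d) (n : ℕ) :
    ∃ ε, CGRule d ε ∧ value d ε = n := by
  obtain ⟨ε, hε, hs, hS, -⟩ :=
    exists_partialSum_eq hd hde (m := n + 1) (n := n) (by omega)
      (by have := lt_H_succ hd (n + 1); omega)
  exact ⟨ε, hε, by rw [value_eq_partialSum hs, hS]⟩

theorem value_lt_value (hd : 0 < d) (hde : Even d) {ε τ : ℕ → ℕ} (hε : CGRule d ε)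
    (hτ : CGRule d τ) (h : CGlt ε τ) : value d ε < value d τ := by
  obtain ⟨ℓ, hlt, hagree⟩ := h
  obtain _ | m := ℓ
  · simp [hε.1, hτ.1] at hlt
  have hpartial : ∀ M, m + 1 ≤ M → partialSum d M ε < partialSum d M τ := by
    intro M hM
    induction M, hM using Nat.le_induction with
    | base =>
      have := hε.partialSum_lt hd hde m
      rw [partialSum_succ, partialSum_succ]
      nlinarith
    | succ M _ ih =>
      rw [partialSum_succ, partialSum_succ, hagree (M + 1) (by omega)]
      omega
  obtain ⟨Mε, hMε⟩ := exists_forall_lt_eq_zero_of_finite hε.2.1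
  obtain ⟨Mτ, hMτ⟩ := exists_forall_lt_eq_zero_of_finite hτ.2.1
  set M := max (max Mε Mτ) (m + 1)
  rw [value_eq_partialSum (m := M) fun k hk => hMε k (by omega),
    value_eq_partialSum (m := M) fun k hk => hMτ k (by omega)]
  exact hpartial M (by omega)

theorem cglt_of_value_lt (hd : 0 < d) (hde : Even d) {ε τ : ℕ → ℕ}
    (hε : CGRule d ε) (hτ : CGRule d τ) (h : value d ε < value d τ) : CGlt ε τ :=
  (CGlt.lt_or_gt_of_ne hε.2.1 hτ.2.1 (by rintro rfl; omega)).resolve_right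
    fun h' => (hτ.value_lt_value hd hde hε h').not_gt h

end CGRule

theorem stmt_16 (d : ℕ) (hd : 0 < d) (hde : Even d)
    (lub : (ℕ → ℕ) → (ℕ → ℕ))
    (hmem : ∀ ε, CGRule d ε → CGRule d (lub ε))
    (hgt : ∀ ε, CGRule d ε → CGlt ε (lub ε))
    (hleast : ∀ ε τ, CGRule d ε → CGRule d τ → CGlt ε τ → ¬ CGlt τ (lub ε)) :
    ∀ n : ℕ,
      ∑ᶠ k, (lub^[n] (fun _ => 0)) k * Nat.fib (2 + d * (k - 1)) = n := by
  have hiter : ∀ n, CGRule d (lub^[n] fun _ => 0) ∧ CGRule.value d (lub^[n] fun _ => 0) = n := by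
    intro n
    induction n with
    | zero => exact ⟨CGRule.zero (CGRule.two_le_A hd hde), by simp [CGRule.value]⟩
    | succ n ih =>
      obtain ⟨hε, hval⟩ := ih
      rw [Function.iterate_succ_apply']
      set ε := lub^[n] fun _ => 0
      have hτ := hmem ε hε
      have hlt := hε.value_lt_value hd hde hτ (hgt ε hε)
      obtain ⟨σ, hσ, hσval⟩ := CGRule.exists_value_eq hd hde (n + 1)
      refine ⟨hτ, le_antisymm (not_lt.1 fun hgt' => ?_) (by omega)⟩
      exact hleast ε σ hε hσ (hε.cglt_of_value_lt hd hde hσ (by omega))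
        (hσ.cglt_of_value_lt hd hde hτ (by omega))
  exact fun n => (hiter n).2
end
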